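/- In the two-arc solution with an interior boundary condition p(t^{m₁}) = L₁ at an interior time t⁰ < t^{m₁} < t^{m₂}, the 9×9 linear system (given in eq. (24) of the paper) relating the constants of integration (a,b,c,d) of the first arc, (g,h,q,w) of the second arc, and the jump multiplier π₀ — imposing initial conditions v(t⁰), p(t⁰), interior position condition on both arcs at t^{m₁}, continuity of velocity at t^{m₁}, final position and transversality λᵛ(t^{m₂}) = 0, continuity of λᵛ at t^{m₁}, and the jump λᵖ⁻ = λᵖ⁺ + π₀ — has a unique solution; i.e., the 9×9 coefficient matrix is invertible for any t⁰ < t^{m₁} < t^{m₂}. -/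

import Mathlib

/-!
A kernel vector of the matrix is a pair of arcs `x` on `[t⁰, t^{m₁}]`, `y` on `[t^{m₁}, t^{m₂}]`
together with `π₀ = x.a - y.a` (last row). Since `λᵛ = -u`, the transversality and `λᵛ`-continuity
rows say `u(t^{m₂}) = 0` and that `u` is continuous at `t^{m₁}`. Taylor-expanding each arc about
its outer endpoint, the homogeneous boundary conditions give `4 v = (t^{m₁} - t⁰) u` and
`3 v = -(t^{m₂} - t^{m₁}) u` for the common velocity `v` and control `u` at `t^{m₁}`, whence
`u = v = 0`. An arc whose position, velocity and control vanish at one time and whose position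
vanishes at another is zero.
-/

@[ext]
structure CubicArc where
  a : ℝ
  b : ℝ
  c : ℝ
  d : ℝ

namespace CubicArc

def ctrl (x : CubicArc) (t : ℝ) : ℝ := x.a * t + x.b

noncomputable def vel (x : CubicArc) (t : ℝ) : ℝ := x.a * t ^ 2 / 2 + x.b * t + x.c

noncomputable def pos (x : CubicArc) (t : ℝ) : ℝ :=
  x.a * t ^ 3 / 6 + x.b * t ^ 2 / 2 + x.c * t + x.d

lemma ctrl_eq_taylor (x : CubicArc) (s t : ℝ) : x.ctrl t = x.ctrl s + x.a * (t - s) := by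
  simp only [ctrl]; ring

lemma vel_eq_taylor (x : CubicArc) (s t : ℝ) :
    x.vel t = x.vel s + x.ctrl s * (t - s) + x.a * (t - s) ^ 2 / 2 := by
  simp only [vel, ctrl]; ring

lemma pos_eq_taylor (x : CubicArc) (s t : ℝ) :
    x.pos t = x.pos s + x.vel s * (t - s) + x.ctrl s * (t - s) ^ 2 / 2 + x.a * (t - s) ^ 3 / 6 := by
  simp only [pos, vel, ctrl]; ring

variable {x : CubicArc} {s t : ℝ}

lemma four_mul_vel_eq_of_pos_eq_zero_of_vel_eq_zero (hst : s ≠ t) (hps : x.pos s = 0)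
    (hvs : x.vel s = 0) (hpt : x.pos t = 0) : 4 * x.vel t = (t - s) * x.ctrl t := by
  rw [x.pos_eq_taylor s, hps, hvs] at hpt
  refine mul_left_cancel₀ (sub_ne_zero.mpr hst.symm) ?_
  linear_combination 4 * (t - s) * x.vel_eq_taylor s t - (t - s) ^ 2 * x.ctrl_eq_taylor s t
    + 6 * hpt + 4 * (t - s) * hvs

lemma three_mul_vel_eq_of_pos_eq_zero_of_ctrl_eq_zero (hst : s ≠ t) (hps : x.pos s = 0)
    (hus : x.ctrl s = 0) (hpt : x.pos t = 0) : 3 * x.vel t = (t - s) * x.ctrl t := by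
  rw [x.pos_eq_taylor s, hps, hus] at hpt
  refine mul_left_cancel₀ (sub_ne_zero.mpr hst.symm) ?_
  linear_combination 3 * (t - s) * x.vel_eq_taylor s t - (t - s) ^ 2 * x.ctrl_eq_taylor s t
    + 3 * hpt + 2 * (t - s) ^ 2 * hus

lemma eq_zero_of_pos_eq_zero_of_jet_eq_zero (hst : s ≠ t) (hps : x.pos s = 0)
    (hvs : x.vel s = 0) (hus : x.ctrl s = 0) (hpt : x.pos t = 0) : x = ⟨0, 0, 0, 0⟩ := by
  rw [x.pos_eq_taylor s, hps, hvs, hus] at hpt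
  have ha : x.a = 0 := by simpa [sub_ne_zero.mpr hst.symm] using hpt
  have hb : x.b = 0 := by simpa [ctrl, ha] using hus
  have hc : x.c = 0 := by simpa [vel, ha, hb] using hvs
  have hd : x.d = 0 := by simpa [pos, ha, hb, hc] using hps
  ext <;> assumption

theorem eq_zero_of_homogeneous_interior_constraint {x y : CubicArc} {t0 t1 t2 : ℝ}
    (h01 : t0 < t1) (h12 : t1 < t2) (hvx0 : x.vel t0 = 0) (hpx0 : x.pos t0 = 0)
    (hpx1 : x.pos t1 = 0) (hpy1 : y.pos t1 = 0) (hpy2 : y.pos t2 = 0) (huy2 : y.ctrl t2 = 0)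
    (hv : x.vel t1 = y.vel t1) (hu : x.ctrl t1 = y.ctrl t1) :
    x = ⟨0, 0, 0, 0⟩ ∧ y = ⟨0, 0, 0, 0⟩ := by
  have hx := four_mul_vel_eq_of_pos_eq_zero_of_vel_eq_zero h01.ne hpx0 hvx0 hpx1
  have hy := three_mul_vel_eq_of_pos_eq_zero_of_ctrl_eq_zero h12.ne' hpy2 huy2 hpy1
  have hux : x.ctrl t1 = 0 := by
    have : (3 * (t1 - t0) + 4 * (t2 - t1)) * x.ctrl t1 = 0 := by
      linear_combination -3 * hx + 4 * hy + 12 * hv + 4 * (t2 - t1) * hu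
    exact (mul_eq_zero.mp this).resolve_left (by linarith)
  have hvx : x.vel t1 = 0 := by linear_combination hx / 4 + (t1 - t0) / 4 * hux
  exact ⟨eq_zero_of_pos_eq_zero_of_jet_eq_zero h01.ne' hpx1 hvx hux hpx0,
    eq_zero_of_pos_eq_zero_of_jet_eq_zero h12.ne hpy1 (hv ▸ hvx) (hu ▸ hux) hpy2⟩

end CubicArc

/-- The 9×9 coefficient matrix of the two-arc linear system
(eq. (24)) — relating the constants of integration `(a,b,c,d)` of the first
arc, `(g,h,q,w)` of the second arc, and the jump multiplier `π₀` — is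
invertible for any `t⁰ < t^{m₁} < t^{m₂}`. -/
theorem interior_constraint_matrix_invertible
    (t0 tm1 tm2 : ℝ) (h01 : t0 < tm1) (h12 : tm1 < tm2) :
    (Matrix.det
      !![t0^2/2,  t0,     1,   0,  0,        0,        0,    0, 0;
         t0^3/6,  t0^2/2, t0,  1,  0,        0,        0,    0, 0;
         tm1^3/6, tm1^2/2, tm1, 1, 0,        0,        0,    0, 0;
         tm1^2/2, tm1,    1,   0,  -tm1^2/2, -tm1,     -1,   0, 0;
         0,       0,      0,   0,  tm2^3/6,  tm2^2/2,  tm2,  1, 0;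
         0,       0,      0,   0,  -tm2,     -1,       0,    0, 0;
         0,       0,      0,   0,  tm1^3/6,  tm1^2/2,  tm1,  1, 0;
         tm1,     1,      0,   0,  -tm1,     -1,       0,    0, 0;
         1,       0,      0,   0,  -1,       0,        0,    0, -1] : ℝ) ≠ 0 := by
  rw [Ne, ← Matrix.exists_mulVec_eq_zero_iff]
  rintro ⟨v, hv_ne, hv⟩
  simp only [Matrix.cons_mulVec, dotProduct, Fin.sum_univ_succ, Fin.isValue, Matrix.cons_val_zero,
    Matrix.cons_val_succ, Fin.succ_zero_eq_one, Fin.succ_one_eq_two, one_mul, Fin.reduceSucc,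
    zero_mul, Finset.univ_unique, Fin.default_eq_zero, Matrix.cons_val_fin_one,
    Finset.sum_const_zero, add_zero, neg_mul, zero_add, Finset.sum_neg_distrib,
    Finset.sum_singleton, Matrix.empty_mulVec, funext_iff, Pi.zero_apply, Fin.forall_fin_succ,
    forall_const] at hv
  obtain ⟨hvx0, hpx0, hpx1, hv1, hpy2, huy2, hpy1, hu1, hπ⟩ := hv
  obtain ⟨hx, hy⟩ := CubicArc.eq_zero_of_homogeneous_interior_constraint
    (x := ⟨v 0, v 1, v 2, v 3⟩) (y := ⟨v 4, v 5, v 6, v 7⟩) h01 h12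
    (by simp only [CubicArc.vel]; linear_combination hvx0)
    (by simp only [CubicArc.pos]; linear_combination hpx0)
    (by simp only [CubicArc.pos]; linear_combination hpx1)
    (by simp only [CubicArc.pos]; linear_combination hpy1)
    (by simp only [CubicArc.pos]; linear_combination hpy2)
    (by simp only [CubicArc.ctrl]; linear_combination -huy2)
    (by simp only [CubicArc.vel]; linear_combination hv1)
    (by simp only [CubicArc.ctrl]; linear_combination hu1)
  simp only [CubicArc.mk.injEq] at hx hy
  obtain ⟨h0, h1, h2, h3⟩ := hx
  obtain ⟨h4, h5, h6, h7⟩ := hy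
  have h8 : v 8 = 0 := by linarith
  refine hv_ne (funext fun i => ?_)
  fin_cases i <;> assumption
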